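/- arXiv:2308.04918 — 4 statements merged into one kernel-verified Lean document; each statement's English description precedes it below -/
import Mathlib

section
/- Let A > 0 and let χ : ℝ → [0,1] be a smooth function that vanishes outside [−A,A]. Then the set { χ·f : f : ℝ → ℂ is continuously differentiable, f and f' are square-integrable, and ‖f‖² + ‖f'‖² ≤ 1 } is totally bounded in L²(ℝ;ℂ). -/
open MeasureTheory


/-- Cauchy–Schwarz/Hölder bound on an interval for the derivative. -/
lemma holder_bound (f : ℝ → ℂ) (hf : ContDiff ℝ 1 f) (hf' : MemLp (deriv f) 2 volume)
    (hI : (∫ x, ‖deriv f x‖ ^ 2) ≤ 1) {a b : ℝ} (hab : a ≤ b) :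
    ‖f b - f a‖ ≤ Real.sqrt (b - a) := by
  have hcont : Continuous (deriv f) := hf.continuous_deriv le_rfl
  have hint : IntervalIntegrable (deriv f) volume a b := hcont.intervalIntegrable a b
  have hftc : ∫ y in a..b, deriv f y = f b - f a :=
    intervalIntegral.integral_deriv_eq_sub (fun x _ => (hf.differentiable one_ne_zero).differentiableAt)
      hint
  rw [← hftc]
  have h1 : ‖∫ y in a..b, deriv f y‖ ≤ ∫ y in Set.Ioc a b, ‖deriv f y‖ := by
    rw [intervalIntegral.integral_of_le hab]
    exact norm_integral_le_integral_norm _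
  -- Hölder on the restricted measure
  have hconj : (2:ℝ).HolderConjugate 2 := by constructor <;> norm_num
  have hmem1 : MemLp (deriv f) (ENNReal.ofReal 2) (volume.restrict (Set.Ioc a b)) := by
    have : (ENNReal.ofReal 2) = (2 : ENNReal) := by norm_num
    rw [this]; exact hf'.restrict _
  have hmem2 : MemLp (fun _ : ℝ => (1:ℂ)) (ENNReal.ofReal 2) (volume.restrict (Set.Ioc a b)) := by
    have : IsFiniteMeasure (volume.restrict (Set.Ioc a b)) := by
      constructor
      rw [Measure.restrict_apply_univ]
      exact measure_Ioc_lt_top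
    exact memLp_const _
  have hCS := integral_mul_norm_le_Lp_mul_Lq (μ := volume.restrict (Set.Ioc a b)) hconj hmem1 hmem2
  simp only [norm_one, mul_one, Real.one_rpow] at hCS
  -- compute ∫ 1
  have hvol : (∫ _ in Set.Ioc a b, (1:ℝ)) = b - a := by
    simp [Real.volume_Ioc, ENNReal.toReal_ofReal (sub_nonneg.2 hab), hab]
  -- bound the square integral by 1
  have hIntSq : Integrable (fun x => ‖deriv f x‖ ^ (2:ℝ)) volume := by
    have := hf'.integrable_norm_rpow (by norm_num) (by norm_num)
    simpa using this
  have hsq_le : (∫ x in Set.Ioc a b, ‖deriv f x‖ ^ (2:ℝ)) ≤ 1 := by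
    refine le_trans (setIntegral_le_integral hIntSq ?_) ?_
    · exact Filter.Eventually.of_forall fun x => Real.rpow_nonneg (norm_nonneg _) _
    · have hrw : (fun x => ‖deriv f x‖ ^ (2:ℝ)) = fun x => ‖deriv f x‖ ^ (2:ℕ) := by
        funext x; rw [← Real.rpow_natCast]; norm_num
      rw [hrw]
      simpa using hI
  have hnn : (0:ℝ) ≤ ∫ x in Set.Ioc a b, ‖deriv f x‖ ^ (2:ℝ) :=
    integral_nonneg fun x => Real.rpow_nonneg (norm_nonneg _) _
  have h2 : (∫ x in Set.Ioc a b, ‖deriv f x‖ ^ (2:ℝ)) ^ (1/(2:ℝ)) ≤ 1 := by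
    calc (∫ x in Set.Ioc a b, ‖deriv f x‖ ^ (2:ℝ)) ^ (1/(2:ℝ)) ≤ 1 ^ (1/(2:ℝ)) :=
          Real.rpow_le_rpow hnn hsq_le (by norm_num)
      _ = 1 := Real.one_rpow _
  rw [hvol] at hCS
  calc ‖∫ y in a..b, deriv f y‖ ≤ ∫ y in Set.Ioc a b, ‖deriv f y‖ := h1
    _ ≤ (∫ x in Set.Ioc a b, ‖deriv f x‖ ^ (2:ℝ)) ^ (1/(2:ℝ)) * (b - a) ^ (1/(2:ℝ)) := hCS
    _ ≤ 1 * (b - a) ^ (1/(2:ℝ)) :=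
        mul_le_mul_of_nonneg_right h2 (Real.rpow_nonneg (sub_nonneg.2 hab) _)
    _ = Real.sqrt (b - a) := by rw [one_mul, Real.sqrt_eq_rpow]
  

lemma sup_bound (f : ℝ → ℂ) (hf : ContDiff ℝ 1 f) (hf2 : MemLp f 2 volume)
    (hf' : MemLp (deriv f) 2 volume)
    (hsum : (∫ x, ‖f x‖ ^ 2) + (∫ x, ‖deriv f x‖ ^ 2) ≤ 1) (x : ℝ) : ‖f x‖ ≤ 3 := by
  have hnn1 : (0:ℝ) ≤ ∫ x, ‖f x‖ ^ 2 := integral_nonneg fun _ => sq_nonneg _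
  have hnn2 : (0:ℝ) ≤ ∫ x, ‖deriv f x‖ ^ 2 := integral_nonneg fun _ => sq_nonneg _
  have hIf' : (∫ x, ‖deriv f x‖ ^ 2) ≤ 1 := by linarith
  have hIf : (∫ x, ‖f x‖ ^ 2) ≤ 1 := by linarith
  have hIntSq : Integrable (fun x => ‖f x‖ ^ (2:ℕ)) volume := by
    have h := hf2.integrable_norm_rpow (by norm_num) (by norm_num)
    have hrw : (fun x => ‖f x‖ ^ ((2:ENNReal).toReal)) = fun x => ‖f x‖ ^ (2:ℕ) := by
      funext y; rw [ENNReal.toReal_ofNat, ← Real.rpow_natCast]; norm_num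
    rwa [hrw] at h
  -- find a good point y
  have hy : ∃ y ∈ Set.Icc (x - 2) x, ‖f y‖ ^ 2 ≤ 1 := by
    by_contra h
    push_neg at h
    have h1 : (2:ℝ) = ∫ _ in Set.Icc (x-2) x, (1:ℝ) := by
      rw [setIntegral_const, measureReal_def, Real.volume_Icc, smul_eq_mul, mul_one,
        ENNReal.toReal_ofReal (by norm_num)]
      norm_num
    have h2 : (∫ _ in Set.Icc (x-2) x, (1:ℝ)) ≤ ∫ y in Set.Icc (x-2) x, ‖f y‖ ^ 2 := by
      refine setIntegral_mono_on (integrableOn_const ?_) hIntSq.integrableOn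
        measurableSet_Icc fun y hy => (h y hy).le
      rw [Real.volume_Icc]; exact ENNReal.ofReal_ne_top
    have h3 : (∫ y in Set.Icc (x-2) x, ‖f y‖ ^ 2) ≤ ∫ y, ‖f y‖ ^ 2 :=
      setIntegral_le_integral hIntSq (Filter.Eventually.of_forall fun _ => sq_nonneg _)
    linarith
  obtain ⟨y, hy1, hy2⟩ := hy
  have hfy : ‖f y‖ ≤ 1 := by nlinarith [norm_nonneg (f y)]
  have hsub : ‖f x - f y‖ ≤ Real.sqrt (x - y) := holder_bound f hf hf' hIf' hy1.2
  have hsq : Real.sqrt (x - y) ≤ 2 := by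
    have h4 : Real.sqrt (x - y) ≤ Real.sqrt 4 := Real.sqrt_le_sqrt (by
      have := hy1.1; linarith)
    rwa [show (4:ℝ) = 2^2 by norm_num, Real.sqrt_sq (by norm_num : (0:ℝ) ≤ 2)] at h4
  have := norm_sub_norm_le (f x) (f y)
  linarith

lemma chi_lip (A : ℝ) (χ : ℝ → ℝ) (hχ_smooth : ContDiff ℝ (⊤ : ℕ∞) χ)
    (hχ_supp : ∀ x, x ∉ Set.Icc (-A) A → χ x = 0) :
    ∃ L : ℝ, 0 ≤ L ∧ ∀ x y : ℝ, |χ x - χ y| ≤ L * |x - y| := by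
  have hcont : Continuous (deriv χ) := hχ_smooth.continuous_deriv (by simp)
  obtain ⟨C, hC⟩ := isCompact_Icc.exists_bound_of_continuousOn
    (s := Set.Icc (-A) A) hcont.continuousOn
  refine ⟨max C 0, le_max_right _ _, fun x y => ?_⟩
  have hbound : ∀ z, ‖deriv χ z‖ ≤ max C 0 := by
    intro z
    by_cases hz : z ∈ Set.Icc (-A) A
    · exact le_trans (hC z hz) (le_max_left _ _)
    · have hev : χ =ᶠ[nhds z] (fun _ => (0:ℝ)) :=
        Filter.eventually_of_mem (isClosed_Icc.isOpen_compl.mem_nhds hz)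
          fun w hw => hχ_supp w hw
      rw [hev.deriv_eq, deriv_const]
      simp [le_max_right]
  have hlip : LipschitzWith (max C 0).toNNReal χ :=
    lipschitzWith_of_nnnorm_deriv_le (hχ_smooth.differentiable (by simp)) fun z => by
      rw [← norm_toNNReal]
      exact Real.toNNReal_mono (hbound z)
  have := hlip.dist_le_mul x y
  rwa [Real.dist_eq, Real.dist_eq, Real.coe_toNNReal _ (le_max_right _ _)] at this

/-- Let `A > 0` and let `χ : ℝ → [0,1]` be a smooth function vanishing
outside `[−A, A]`.  Then the set `{ χ·f : f ∈ C¹(ℝ;ℂ), f, f' ∈ L², ‖f‖² + ‖f'‖² ≤ 1 }`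
is totally bounded in `L²(ℝ;ℂ)`. -/
theorem totallyBounded_cutoff_H1_ball
    (A : ℝ) (hA : 0 < A) (χ : ℝ → ℝ)
    (hχ_smooth : ContDiff ℝ (⊤ : ℕ∞) χ)
    (hχ01 : ∀ x, χ x ∈ Set.Icc (0 : ℝ) 1)
    (hχ_supp : ∀ x, x ∉ Set.Icc (-A) A → χ x = 0) :
    TotallyBounded { g : Lp ℂ 2 (volume : Measure ℝ) |
      ∃ f : ℝ → ℂ, ContDiff ℝ 1 f ∧ MemLp f 2 volume ∧ MemLp (deriv f) 2 volume ∧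
        (∫ x, ‖f x‖ ^ 2) + (∫ x, ‖deriv f x‖ ^ 2) ≤ 1 ∧
        ⇑g =ᵐ[volume] fun x => (χ x : ℂ) * f x } := by
  have hAA : -A ≤ A := by linarith
  obtain ⟨L, hL0, hLip⟩ := chi_lip A χ hχ_smooth hχ_supp
  have hχ_le : ∀ x, |χ x| ≤ 1 := fun x => abs_le.2 ⟨by linarith [(hχ01 x).1], (hχ01 x).2⟩
  set S : Set (BoundedContinuousFunction (Set.Icc (-A) A) ℂ) :=
    { h | ∃ f : ℝ → ℂ, ContDiff ℝ 1 f ∧ MemLp f 2 volume ∧ MemLp (deriv f) 2 volume ∧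
        (∫ x, ‖f x‖ ^ 2) + (∫ x, ‖deriv f x‖ ^ 2) ≤ 1 ∧
        ∀ x : Set.Icc (-A) A, h x = (χ x : ℂ) * f x } with hS
  -- uniform bound
  have hmem_bound : ∀ h ∈ S, ∀ x : Set.Icc (-A) A, ‖h x‖ ≤ 3 := by
    rintro h ⟨f, h1, h2, h3, h4, h5⟩ x
    rw [h5 x, norm_mul, Complex.norm_real]
    calc |χ x| * ‖f x‖ ≤ 1 * 3 :=
          mul_le_mul (hχ_le _) (sup_bound f h1 h2 h3 h4 _) (norm_nonneg _) zero_le_one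
      _ = 3 := one_mul 3
  -- modulus of continuity
  have hmod : ∀ h ∈ S, ∀ x y : Set.Icc (-A) A,
      dist (h x) (h y) ≤ Real.sqrt (dist x y) + 3 * L * dist x y := by
    rintro h ⟨f, h1, h2, h3, h4, h5⟩ x y
    have hnn1 : (0:ℝ) ≤ ∫ x, ‖f x‖ ^ 2 := integral_nonneg fun _ => sq_nonneg _
    have hIf' : (∫ x, ‖deriv f x‖ ^ 2) ≤ 1 := by linarith
    have hfd : ‖f x - f y‖ ≤ Real.sqrt (dist x y) := by
      rcases le_total (x : ℝ) (y : ℝ) with hxy | hxy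
      · rw [norm_sub_rev, Subtype.dist_eq, Real.dist_eq, abs_of_nonpos (by linarith), neg_sub]
        exact holder_bound f h1 h3 hIf' hxy
      · rw [Subtype.dist_eq, Real.dist_eq, abs_of_nonneg (by linarith)]
        exact holder_bound f h1 h3 hIf' hxy
    have hfy : ‖f y‖ ≤ 3 := sup_bound f h1 h2 h3 h4 _
    have hchi : ‖(χ x : ℂ) - (χ y : ℂ)‖ ≤ L * dist x y := by
      rw [← Complex.ofReal_sub, Complex.norm_real, Subtype.dist_eq, Real.dist_eq]
      exact hLip _ _
    rw [dist_eq_norm, h5 x, h5 y]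
    calc ‖(χ x : ℂ) * f x - (χ y : ℂ) * f y‖
        = ‖(χ x : ℂ) * (f x - f y) + ((χ x : ℂ) - (χ y : ℂ)) * f y‖ := by ring_nf
      _ ≤ ‖(χ x : ℂ) * (f x - f y)‖ + ‖((χ x : ℂ) - (χ y : ℂ)) * f y‖ := norm_add_le _ _
      _ ≤ 1 * Real.sqrt (dist x y) + (L * dist x y) * 3 := by
          rw [norm_mul, norm_mul, Complex.norm_real]
          exact add_le_add
            (mul_le_mul (hχ_le _) hfd (norm_nonneg _) zero_le_one)
            (mul_le_mul hchi hfy (norm_nonneg _) (by positivity))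
      _ = Real.sqrt (dist x y) + 3 * L * dist x y := by ring
  -- total boundedness of S
  have hS_tb : TotallyBounded S := by
    have hequi : Equicontinuous fun h : S => ⇑(h : BoundedContinuousFunction (Set.Icc (-A) A) ℂ) := by
      apply UniformEquicontinuous.equicontinuous
      rw [Metric.uniformEquicontinuous_iff]
      intro ε hε
      refine ⟨min ((ε/4)^2) ((ε/2)/(3*L+1)), by positivity, fun x y hxy h => ?_⟩
      have hd0 : (0:ℝ) ≤ dist x y := dist_nonneg
      have h1 : Real.sqrt (dist x y) ≤ ε/4 := by
        calc Real.sqrt (dist x y) ≤ Real.sqrt ((ε/4)^2) :=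
              Real.sqrt_le_sqrt (le_trans hxy.le (min_le_left _ _))
          _ = ε/4 := Real.sqrt_sq (by positivity)
      have h2 : 3 * L * dist x y ≤ ε/2 := by
        have : dist x y ≤ (ε/2)/(3*L+1) := le_trans hxy.le (min_le_right _ _)
        have h3 : 3 * L * dist x y ≤ 3 * L * ((ε/2)/(3*L+1)) := by
          apply mul_le_mul_of_nonneg_left this (by positivity)
        calc 3 * L * dist x y ≤ 3 * L * ((ε/2)/(3*L+1)) := h3
          _ ≤ ε/2 := by
            rw [mul_div_assoc', div_le_iff₀ (by positivity)]
            nlinarith [hε.le]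
      calc dist ((h : BoundedContinuousFunction _ ℂ) x) ((h : BoundedContinuousFunction _ ℂ) y)
          ≤ Real.sqrt (dist x y) + 3 * L * dist x y := hmod _ h.2 x y
        _ ≤ ε/4 + ε/2 := add_le_add h1 h2
        _ < ε := by linarith
    have hcomp := BoundedContinuousFunction.arzela_ascoli (Metric.closedBall (0:ℂ) 3)
      (isCompact_closedBall _ _) S
      (fun h x hx => by
        rw [Metric.mem_closedBall, dist_zero_right]
        exact hmem_bound h hx x) hequi
    exact hcomp.totallyBounded.subset subset_closure
  -- the extension map to L²
  set gext : BoundedContinuousFunction (Set.Icc (-A) A) ℂ → ℝ → ℂ :=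
    fun h => (Set.Icc (-A) A).indicator (fun x => h (Set.projIcc (-A) A hAA x)) with hgext
  haveI hfin : IsFiniteMeasure (volume.restrict (Set.Icc (-A) A)) :=
    ⟨by rw [Measure.restrict_apply_univ]; exact measure_Icc_lt_top⟩
  have hmemℒp : ∀ h, MemLp (gext h) 2 (volume : Measure ℝ) := by
    intro h
    rw [hgext]
    rw [memLp_indicator_iff_restrict measurableSet_Icc]
    exact MemLp.of_bound ((h.continuous.comp continuous_projIcc).aestronglyMeasurable) ‖h‖
      (Filter.Eventually.of_forall fun x => h.norm_coe_le_norm _)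
  set Φ : BoundedContinuousFunction (Set.Icc (-A) A) ℂ → Lp ℂ 2 (volume : Measure ℝ) :=
    fun h => (hmemℒp h).toLp _ with hΦ
  have hΦuc : UniformContinuous Φ := by
    rw [Metric.uniformContinuous_iff]
    intro ε hε
    refine ⟨ε / (Real.sqrt (2*A) + 1), by positivity, fun h₁ h₂ hdist => ?_⟩
    have key : dist (Φ h₁) (Φ h₂) ≤ Real.sqrt (2*A) * dist h₁ h₂ := by
      rw [hΦ, dist_eq_norm, ← MemLp.toLp_sub, Lp.norm_toLp]
      have heq : gext h₁ - gext h₂ = (Set.Icc (-A) A).indicator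
          (fun x => h₁ (Set.projIcc (-A) A hAA x) - h₂ (Set.projIcc (-A) A hAA x)) := by
        funext x
        by_cases hx : x ∈ Set.Icc (-A) A <;>
          simp [hgext, Set.indicator_of_mem, Set.indicator_of_notMem, hx]
      rw [heq, eLpNorm_indicator_eq_eLpNorm_restrict measurableSet_Icc]
      have hb : eLpNorm (fun x => h₁ (Set.projIcc (-A) A hAA x) - h₂ (Set.projIcc (-A) A hAA x))
          2 (volume.restrict (Set.Icc (-A) A)) ≤
          (volume.restrict (Set.Icc (-A) A) Set.univ) ^ ((2:ENNReal).toReal)⁻¹ *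
            ENNReal.ofReal (dist h₁ h₂) := by
        apply eLpNorm_le_of_ae_bound
        refine Filter.Eventually.of_forall fun x => ?_
        calc ‖h₁ (Set.projIcc (-A) A hAA x) - h₂ (Set.projIcc (-A) A hAA x)‖
            = dist (h₁ (Set.projIcc (-A) A hAA x)) (h₂ (Set.projIcc (-A) A hAA x)) :=
              (dist_eq_norm _ _).symm
          _ ≤ dist h₁ h₂ := BoundedContinuousFunction.dist_coe_le_dist _
      have hvol : volume.restrict (Set.Icc (-A) A) Set.univ = ENNReal.ofReal (2*A) := by
        rw [Measure.restrict_apply_univ, Real.volume_Icc]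
        congr 1
        ring
      rw [hvol] at hb
      have hfin2 : (ENNReal.ofReal (2*A)) ^ ((2:ENNReal).toReal)⁻¹ *
          ENNReal.ofReal (dist h₁ h₂) ≠ ⊤ :=
        ENNReal.mul_ne_top (ENNReal.rpow_ne_top_of_nonneg (by norm_num) ENNReal.ofReal_ne_top)
          ENNReal.ofReal_ne_top
      calc (eLpNorm _ 2 (volume.restrict (Set.Icc (-A) A))).toReal
          ≤ ((ENNReal.ofReal (2*A)) ^ ((2:ENNReal).toReal)⁻¹ *
              ENNReal.ofReal (dist h₁ h₂)).toReal := ENNReal.toReal_mono hfin2 hb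
        _ = Real.sqrt (2*A) * dist h₁ h₂ := by
            rw [ENNReal.toReal_mul, ← ENNReal.toReal_rpow,
              ENNReal.toReal_ofReal (by positivity : (0:ℝ) ≤ 2*A),
              ENNReal.toReal_ofReal dist_nonneg, ENNReal.toReal_ofNat,
              Real.sqrt_eq_rpow]
            norm_num
    have hd0 : (0:ℝ) ≤ dist h₁ h₂ := dist_nonneg
    have hs0 : (0:ℝ) ≤ Real.sqrt (2*A) := Real.sqrt_nonneg _
    calc dist (Φ h₁) (Φ h₂) ≤ Real.sqrt (2*A) * dist h₁ h₂ := key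
      _ ≤ (Real.sqrt (2*A) + 1) * dist h₁ h₂ := by nlinarith
      _ < (Real.sqrt (2*A) + 1) * (ε / (Real.sqrt (2*A) + 1)) := by
          exact mul_lt_mul_of_pos_left hdist (by positivity)
      _ = ε := by field_simp
  -- final subset argument
  have hsubset : { g : Lp ℂ 2 (volume : Measure ℝ) |
      ∃ f : ℝ → ℂ, ContDiff ℝ 1 f ∧ MemLp f 2 volume ∧ MemLp (deriv f) 2 volume ∧
        (∫ x, ‖f x‖ ^ 2) + (∫ x, ‖deriv f x‖ ^ 2) ≤ 1 ∧
        ⇑g =ᵐ[volume] fun x => (χ x : ℂ) * f x } ⊆ Φ '' S := by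
    rintro g ⟨f, h1, h2, h3, h4, h5⟩
    have hcontf : Continuous fun x : Set.Icc (-A) A => (χ x : ℂ) * f x :=
      ((Complex.continuous_ofReal.comp hχ_smooth.continuous).mul
        (h1.continuous)).comp continuous_subtype_val
    refine ⟨BoundedContinuousFunction.mkOfCompact ⟨_, hcontf⟩,
      ⟨f, h1, h2, h3, h4, fun x => rfl⟩, ?_⟩
    apply Lp.ext
    have hcoe : ⇑(Φ (BoundedContinuousFunction.mkOfCompact ⟨_, hcontf⟩)) =ᵐ[volume]
        gext (BoundedContinuousFunction.mkOfCompact ⟨_, hcontf⟩) := MemLp.coeFn_toLp _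
    have heq : gext (BoundedContinuousFunction.mkOfCompact ⟨_, hcontf⟩) =
        fun x => (χ x : ℂ) * f x := by
      funext x
      by_cases hx : x ∈ Set.Icc (-A) A
      · rw [hgext]
        simp only [Set.indicator_of_mem hx, BoundedContinuousFunction.mkOfCompact_apply,
          ContinuousMap.coe_mk, Set.projIcc_of_mem hAA hx]
      · rw [hgext]
        simp only [Set.indicator_of_notMem hx]
        rw [hχ_supp x hx]
        simp
    rw [heq] at hcoe
    exact hcoe.trans h5.symm
  exact (hS_tb.image hΦuc).subset hsubset
end

section
/- For every q ∈ (0,2) there exists a constant C_q > 0 with the following property: for all continuously differentiable functions u, v : ℝ → ℂ such that u, u', v, v' are square-integrable, ‖ |v|^q v − |u|^q u ‖ ≤ C_q ‖u − v‖ ( ‖u‖_{H¹}^q + ‖v‖_{H¹}^q ), where the left-hand side is the L²-norm of the function x ↦ |v(x)|^q v(x) − |u(x)|^q u(x). -/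
open MeasureTheory

/-- The `L²(ℝ;ℂ)` norm of a function, `‖f‖ = (∫ ‖f(x)‖² dx)^{1/2}`. -/
noncomputable def L2norm (f : ℝ → ℂ) : ℝ := Real.sqrt (∫ x, ‖f x‖ ^ 2)

/-- The `H¹(ℝ;ℂ)` norm of a function, `‖f‖_{H¹} = (‖f‖² + ‖f'‖²)^{1/2}`. -/
noncomputable def H1norm (f : ℝ → ℂ) : ℝ :=
  Real.sqrt ((∫ x, ‖f x‖ ^ 2) + ∫ x, ‖deriv f x‖ ^ 2)

/-!
Pointwise, `‖|b|^q b - |a|^q a‖ ≤ (q + 2)(|a|^q + |b|^q)|b - a|`: split the difference as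
`|b|^q (b - a) + (|b|^q - |a|^q) a` and bound the second term by Bernoulli's inequality after
scaling to `|a| ≤ |b| = 1`. In one dimension the `H¹` norm controls the sup norm, since
`|u(x)|² = -∫_x^∞ 2⟪u, u'⟫ ≤ ‖u‖² + ‖u'‖²`, so the factor `|u(x)|^q + |v(x)|^q` is at most
`‖u‖_{H¹}^q + ‖v‖_{H¹}^q` and the pointwise bound integrates to the `L²` estimate.
-/

open Set Filter

namespace Real

theorem one_sub_rpow_le_mul_one_sub {q t : ℝ} (hq : 0 ≤ q) (ht0 : 0 ≤ t) (ht1 : t ≤ 1) :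
    1 - t ^ q ≤ (q + 1) * (1 - t) := by
  rcases le_total q 1 with hq1 | hq1
  · have : t ≤ t ^ q := by simpa using rpow_le_rpow_of_exponent_ge' ht0 ht1 hq hq1
    nlinarith
  · have := one_add_mul_self_le_rpow_one_add (s := t - 1) (by linarith) hq1
    rw [add_sub_cancel] at this
    nlinarith

theorem rpow_sub_rpow_mul_le {q s t : ℝ} (hq : 0 ≤ q) (hs : 0 ≤ s) (hst : s ≤ t) :
    (t ^ q - s ^ q) * s ≤ (q + 1) * t ^ q * (t - s) := by
  obtain rfl | ht := (hs.trans hst).eq_or_lt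
  · obtain rfl := le_antisymm hst hs
    simp
  obtain ⟨r, hr0, hr1, rfl⟩ : ∃ r, 0 ≤ r ∧ r ≤ 1 ∧ s = r * t :=
    ⟨s / t, div_nonneg hs ht.le, (div_le_one ht).2 hst, by field_simp⟩
  have hratio := one_sub_rpow_le_mul_one_sub hq hr0 hr1
  have htq : 0 ≤ t ^ q := rpow_nonneg ht.le q
  rw [mul_rpow hr0 ht.le]
  have hscaled : (1 - r ^ q) * r ≤ (q + 1) * (1 - r) := by
    nlinarith [rpow_le_one hr0 hr1 hq]
  nlinarith [mul_le_mul_of_nonneg_left hscaled (mul_nonneg htq ht.le)]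

end Real

section Pointwise

variable {E : Type*} [NormedAddCommGroup E] [NormedSpace ℝ E] {q : ℝ}

theorem norm_rpow_smul_sub_rpow_smul_le_of_norm_le (hq : 0 ≤ q) {a b : E} (hab : ‖a‖ ≤ ‖b‖) :
    ‖‖b‖ ^ q • b - ‖a‖ ^ q • a‖ ≤ (q + 2) * ‖b‖ ^ q * ‖b - a‖ := by
  have hbq : 0 ≤ ‖b‖ ^ q := Real.rpow_nonneg (norm_nonneg b) q
  have hdiff : 0 ≤ ‖b‖ ^ q - ‖a‖ ^ q :=
    sub_nonneg.2 (Real.rpow_le_rpow (norm_nonneg a) hab hq)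
  have hkey := Real.rpow_sub_rpow_mul_le hq (norm_nonneg a) hab
  have hba : ‖b‖ - ‖a‖ ≤ ‖b - a‖ := norm_sub_norm_le b a
  calc ‖‖b‖ ^ q • b - ‖a‖ ^ q • a‖
      = ‖‖b‖ ^ q • (b - a) + (‖b‖ ^ q - ‖a‖ ^ q) • a‖ := by
        rw [smul_sub, sub_smul]; abel_nf
    _ ≤ ‖b‖ ^ q * ‖b - a‖ + (‖b‖ ^ q - ‖a‖ ^ q) * ‖a‖ := by
        refine (norm_add_le _ _).trans_eq ?_
        rw [norm_smul, norm_smul, Real.norm_of_nonneg hbq, Real.norm_of_nonneg hdiff]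
    _ ≤ (q + 2) * ‖b‖ ^ q * ‖b - a‖ := by
        nlinarith [mul_le_mul_of_nonneg_left hba hbq]

theorem norm_rpow_smul_sub_rpow_smul_le (hq : 0 ≤ q) (a b : E) :
    ‖‖b‖ ^ q • b - ‖a‖ ^ q • a‖ ≤ (q + 2) * (‖a‖ ^ q + ‖b‖ ^ q) * ‖b - a‖ := by
  have haq : 0 ≤ ‖a‖ ^ q := Real.rpow_nonneg (norm_nonneg a) q
  have hbq : 0 ≤ ‖b‖ ^ q := Real.rpow_nonneg (norm_nonneg b) q
  have hba : 0 ≤ (q + 2) * ‖b - a‖ := by positivity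
  rcases le_total ‖a‖ ‖b‖ with hab | hba'
  · nlinarith [norm_rpow_smul_sub_rpow_smul_le_of_norm_le hq hab]
  · have := norm_rpow_smul_sub_rpow_smul_le_of_norm_le hq hba'
    rw [norm_sub_rev, norm_sub_rev a] at this
    nlinarith

end Pointwise

theorem norm_le_integral_norm_deriv {E : Type*} [NormedAddCommGroup E] [NormedSpace ℝ E]
    [CompleteSpace E] {f f' : ℝ → E} (hderiv : ∀ x, HasDerivAt f (f' x) x)
    (hf : Integrable f) (hf' : Integrable f') (x : ℝ) : ‖f x‖ ≤ ∫ t, ‖f' t‖ := by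
  have hlim : Tendsto f atTop (nhds 0) :=
    tendsto_zero_of_hasDerivAt_of_integrableOn_Ioi (a := x) (fun y _ => hderiv y)
      hf'.integrableOn hf.integrableOn
  have hFTC : ∫ t in Ioi x, f' t = 0 - f x :=
    integral_Ioi_of_hasDerivAt_of_tendsto' (fun y _ => hderiv y) hf'.integrableOn hlim
  calc ‖f x‖ = ‖∫ t in Ioi x, f' t‖ := by rw [hFTC, zero_sub, norm_neg]
    _ ≤ ∫ t in Ioi x, ‖f' t‖ := norm_integral_le_integral_norm _
    _ ≤ ∫ t, ‖f' t‖ := setIntegral_le_integral hf'.norm (ae_of_all _ fun _ => norm_nonneg _)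

theorem norm_sq_le_integral_norm_sq_add_integral_norm_deriv_sq {E : Type*}
    [NormedAddCommGroup E] [InnerProductSpace ℝ E] {u : ℝ → E} (hu : Differentiable ℝ u)
    (hu2 : MemLp u 2) (hu'2 : MemLp (deriv u) 2) (x : ℝ) :
    ‖u x‖ ^ 2 ≤ (∫ t, ‖u t‖ ^ 2) + ∫ t, ‖deriv u t‖ ^ 2 := by
  have hsq : Integrable fun t => ‖u t‖ ^ 2 := hu2.norm.integrable_sq
  have hsq' : Integrable fun t => ‖deriv u t‖ ^ 2 := hu'2.norm.integrable_sq
  have hbound : ∀ t, ‖2 * inner ℝ (u t) (deriv u t)‖ ≤ ‖u t‖ ^ 2 + ‖deriv u t‖ ^ 2 := by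
    intro t
    rw [norm_mul, Real.norm_two, Real.norm_eq_abs]
    nlinarith [abs_real_inner_le_norm (u t) (deriv u t), sq_nonneg (‖u t‖ - ‖deriv u t‖)]
  have hint : Integrable fun t => 2 * inner ℝ (u t) (deriv u t) :=
    (hsq.add hsq').mono'
      ((hu2.aestronglyMeasurable.inner hu'2.aestronglyMeasurable).const_mul 2)
      (ae_of_all _ hbound)
  calc ‖u x‖ ^ 2 = ‖‖u x‖ ^ 2‖ := by rw [Real.norm_of_nonneg (sq_nonneg _)]
    _ ≤ ∫ t, ‖2 * inner ℝ (u t) (deriv u t)‖ :=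
        norm_le_integral_norm_deriv (fun t => (hu t).hasDerivAt.norm_sq) hsq hint x
    _ ≤ ∫ t, (‖u t‖ ^ 2 + ‖deriv u t‖ ^ 2) := integral_mono hint.norm (hsq.add hsq') hbound
    _ = (∫ t, ‖u t‖ ^ 2) + ∫ t, ‖deriv u t‖ ^ 2 := integral_add hsq hsq'

theorem norm_le_H1norm {u : ℝ → ℂ} (hu : Differentiable ℝ u) (hu2 : MemLp u 2)
    (hu'2 : MemLp (deriv u) 2) (x : ℝ) : ‖u x‖ ≤ H1norm u :=
  Real.le_sqrt_of_sq_le (norm_sq_le_integral_norm_sq_add_integral_norm_deriv_sq hu hu2 hu'2 x)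

theorem L2norm_le_mul_of_norm_le {f g : ℝ → ℂ} {K : ℝ} (hg : MemLp g 2) (hK : 0 ≤ K)
    (hfg : ∀ x, ‖f x‖ ≤ K * ‖g x‖) : L2norm f ≤ K * L2norm g := by
  have hsq : ∀ x, ‖f x‖ ^ 2 ≤ K ^ 2 * ‖g x‖ ^ 2 := fun x => by
    rw [← mul_pow]; exact pow_le_pow_left₀ (norm_nonneg _) (hfg x) 2
  have hint : (∫ x, ‖f x‖ ^ 2) ≤ K ^ 2 * ∫ x, ‖g x‖ ^ 2 := by
    rw [← integral_const_mul]
    exact integral_mono_of_nonneg (ae_of_all _ fun _ => sq_nonneg _)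
      (hg.norm.integrable_sq.const_mul _) (ae_of_all _ hsq)
  calc L2norm f ≤ Real.sqrt (K ^ 2 * ∫ x, ‖g x‖ ^ 2) := Real.sqrt_le_sqrt hint
    _ = K * L2norm g := by rw [Real.sqrt_mul (sq_nonneg K), Real.sqrt_sq hK, L2norm]

theorem nonlinearity_L2_difference_estimate_general (q : ℝ) (hq0 : 0 < q) :
    ∃ C > (0 : ℝ), ∀ u v : ℝ → ℂ,
      ContDiff ℝ 1 u → MemLp u 2 volume → MemLp (deriv u) 2 volume →
      ContDiff ℝ 1 v → MemLp v 2 volume → MemLp (deriv v) 2 volume →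
      L2norm (fun x => ((‖v x‖ ^ q : ℝ) : ℂ) * v x - ((‖u x‖ ^ q : ℝ) : ℂ) * u x) ≤
        C * L2norm (fun x => u x - v x) * (H1norm u ^ q + H1norm v ^ q) := by
  refine ⟨q + 2, by linarith, fun u v hu hu2 hu'2 hv hv2 hv'2 => ?_⟩
  have hpointwise : ∀ x, ‖((‖v x‖ ^ q : ℝ) : ℂ) * v x - ((‖u x‖ ^ q : ℝ) : ℂ) * u x‖ ≤
      (q + 2) * (H1norm u ^ q + H1norm v ^ q) * ‖u x - v x‖ := fun x => by
    simp only [← Complex.real_smul]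
    rw [norm_sub_rev (u x)]
    refine (norm_rpow_smul_sub_rpow_smul_le hq0.le (u x) (v x)).trans ?_
    gcongr
    exacts [norm_le_H1norm (hu.differentiable one_ne_zero) hu2 hu'2 x,
      norm_le_H1norm (hv.differentiable one_ne_zero) hv2 hv'2 x]
  have hH1 : 0 ≤ H1norm u ^ q + H1norm v ^ q :=
    add_nonneg (Real.rpow_nonneg (Real.sqrt_nonneg _) q) (Real.rpow_nonneg (Real.sqrt_nonneg _) q)
  calc _ ≤ (q + 2) * (H1norm u ^ q + H1norm v ^ q) * L2norm (fun x => u x - v x) :=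
        L2norm_le_mul_of_norm_le (hu2.sub hv2) (by positivity) hpointwise
    _ = _ := by ring

/-- For every `q ∈ (0,2)` there is `C_q > 0` such that for all `C¹`
functions `u, v : ℝ → ℂ` with `u, u', v, v'` square-integrable,
`‖ |v|^q v − |u|^q u ‖ ≤ C_q ‖u − v‖ (‖u‖_{H¹}^q + ‖v‖_{H¹}^q)`. -/
theorem nonlinearity_L2_difference_estimate (q : ℝ) (hq0 : 0 < q) (hq2 : q < 2) :
    ∃ C > (0 : ℝ), ∀ u v : ℝ → ℂ,
      ContDiff ℝ 1 u → MemLp u 2 volume → MemLp (deriv u) 2 volume →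
      ContDiff ℝ 1 v → MemLp v 2 volume → MemLp (deriv v) 2 volume →
      L2norm (fun x => ((‖v x‖ ^ q : ℝ) : ℂ) * v x - ((‖u x‖ ^ q : ℝ) : ℂ) * u x) ≤
        C * L2norm (fun x => u x - v x) * (H1norm u ^ q + H1norm v ^ q) :=
  nonlinearity_L2_difference_estimate_general q hq0
end

section
/- For every q ∈ (0,2) there exists a constant C_q > 0 such that for every square-integrable f : ℝ → ℂ and every continuously differentiable g : ℝ → ℂ with g and g' square-integrable, ∫_ℝ |f(x)|^q |g(x)|² dx ≤ C_q ‖f‖^q ‖g‖_{H¹}^q ‖g‖^{2−q}. -/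
open MeasureTheory

/-!
Integrating `(‖g‖²)' = 2⟪g, g'⟫` over `[x, ∞)` and using `2|⟪g, g'⟫| ≤ ‖g‖² + ‖g'‖²` gives
`sup ‖g‖ ≤ ‖g‖_{H¹}`. Hence `‖f‖^q ‖g‖² ≤ ‖g‖_{H¹}^q (‖f‖²)^{q/2} (‖g‖²)^{1-q/2}` pointwise, and
Hölder's inequality with weights `q/2` and `1 - q/2` bounds the integral of the right-hand side
by `‖g‖_{H¹}^q ‖f‖^q ‖g‖^{2-q}`, so `C_q = 1` works.
-/

open Set Filter

section Holder

variable {α : Type*} [MeasurableSpace α] {μ : Measure α}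

theorem integral_rpow_mul_rpow_le {a b : α → ℝ} (ha0 : 0 ≤ᵐ[μ] a) (hb0 : 0 ≤ᵐ[μ] b)
    (ha : Integrable a μ) (hb : Integrable b μ) {θ : ℝ} (hθ0 : 0 ≤ θ) (hθ1 : θ ≤ 1) :
    ∫ x, a x ^ θ * b x ^ (1 - θ) ∂μ ≤ (∫ x, a x ∂μ) ^ θ * (∫ x, b x ∂μ) ^ (1 - θ) := by
  have hθ1' : 0 ≤ 1 - θ := sub_nonneg.2 hθ1
  have hmeas : AEStronglyMeasurable (fun x => a x ^ θ * b x ^ (1 - θ)) μ :=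
    (ha.1.aemeasurable.pow_const θ).aestronglyMeasurable.mul
      (hb.1.aemeasurable.pow_const (1 - θ)).aestronglyMeasurable
  have hofReal : ∀ᵐ x ∂μ, ENNReal.ofReal (a x ^ θ * b x ^ (1 - θ)) =
      ENNReal.ofReal (a x) ^ θ * ENNReal.ofReal (b x) ^ (1 - θ) := by
    filter_upwards [ha0, hb0] with x hax hbx
    rw [ENNReal.ofReal_rpow_of_nonneg hax hθ0, ENNReal.ofReal_rpow_of_nonneg hbx hθ1',
      ENNReal.ofReal_mul (Real.rpow_nonneg hax θ)]
  have hfin : (∫⁻ x, ENNReal.ofReal (a x) ∂μ) ^ θ * (∫⁻ x, ENNReal.ofReal (b x) ∂μ) ^ (1 - θ)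
      ≠ ⊤ :=
    ENNReal.mul_ne_top (ENNReal.rpow_ne_top_of_nonneg hθ0 ha.lintegral_lt_top.ne)
      (ENNReal.rpow_ne_top_of_nonneg hθ1' hb.lintegral_lt_top.ne)
  have hprod0 : 0 ≤ᵐ[μ] fun x => a x ^ θ * b x ^ (1 - θ) := by
    filter_upwards [ha0, hb0] with x hax hbx
    exact mul_nonneg (Real.rpow_nonneg hax θ) (Real.rpow_nonneg hbx _)
  calc ∫ x, a x ^ θ * b x ^ (1 - θ) ∂μ
      = (∫⁻ x, ENNReal.ofReal (a x) ^ θ * ENNReal.ofReal (b x) ^ (1 - θ) ∂μ).toReal := by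
        rw [integral_eq_lintegral_of_nonneg_ae hprod0 hmeas, lintegral_congr_ae hofReal]
    _ ≤ ((∫⁻ x, ENNReal.ofReal (a x) ∂μ) ^ θ * (∫⁻ x, ENNReal.ofReal (b x) ∂μ) ^ (1 - θ)).toReal :=
        ENNReal.toReal_mono hfin <| ENNReal.lintegral_mul_norm_pow_le
          ha.1.aemeasurable.ennreal_ofReal hb.1.aemeasurable.ennreal_ofReal hθ0 hθ1' (by ring)
    _ = (∫ x, a x ∂μ) ^ θ * (∫ x, b x ∂μ) ^ (1 - θ) := by
        rw [ENNReal.toReal_mul, ← ENNReal.toReal_rpow, ← ENNReal.toReal_rpow,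
          ← integral_eq_lintegral_of_nonneg_ae ha0 ha.1,
          ← integral_eq_lintegral_of_nonneg_ae hb0 hb.1]

theorem integrable_rpow_mul_rpow {a b : α → ℝ} (ha0 : 0 ≤ᵐ[μ] a) (hb0 : 0 ≤ᵐ[μ] b)
    (ha : Integrable a μ) (hb : Integrable b μ) {θ : ℝ} (hθ0 : 0 ≤ θ) (hθ1 : θ ≤ 1) :
    Integrable (fun x => a x ^ θ * b x ^ (1 - θ)) μ := by
  refine ((ha.const_mul θ).add (hb.const_mul (1 - θ))).mono'
    ((ha.1.aemeasurable.pow_const θ).aestronglyMeasurable.mul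
      (hb.1.aemeasurable.pow_const (1 - θ)).aestronglyMeasurable) ?_
  filter_upwards [ha0, hb0] with x hax hbx
  rw [Real.norm_of_nonneg (mul_nonneg (Real.rpow_nonneg hax θ) (Real.rpow_nonneg hbx _))]
  exact Real.geom_mean_le_arith_mean2_weighted hθ0 (sub_nonneg.2 hθ1) hax hbx (by ring)

end Holder

section SupBound

variable {E : Type*} [NormedAddCommGroup E] [InnerProductSpace ℝ E]

theorem norm_sq_le_integral_norm_sq_add_integral_norm_deriv_sq_s9 {g : ℝ → E}
    (hg : Differentiable ℝ g) (hg2 : MemLp g 2 volume) (hg'2 : MemLp (deriv g) 2 volume)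
    (x : ℝ) : ‖g x‖ ^ 2 ≤ (∫ t, ‖g t‖ ^ 2) + ∫ t, ‖deriv g t‖ ^ 2 := by
  have hsq := (memLp_two_iff_integrable_sq_norm hg2.1).1 hg2
  have hsq' := (memLp_two_iff_integrable_sq_norm hg'2.1).1 hg'2
  have hderiv : ∀ t, HasDerivAt (‖g ·‖ ^ 2) (2 * inner ℝ (g t) (deriv g t)) t :=
    fun t => (hg t).hasDerivAt.norm_sq
  have hbound : ∀ t, |2 * inner ℝ (g t) (deriv g t)| ≤ ‖g t‖ ^ 2 + ‖deriv g t‖ ^ 2 := fun t => by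
    rw [abs_mul, abs_two]
    nlinarith [abs_real_inner_le_norm (g t) (deriv g t), two_mul_le_add_sq ‖g t‖ ‖deriv g t‖]
  have hsum : Integrable (fun t => ‖g t‖ ^ 2 + ‖deriv g t‖ ^ 2) := hsq.add hsq'
  have hint : Integrable (fun t => 2 * inner ℝ (g t) (deriv g t)) :=
    hsum.mono' ((hg.continuous.aestronglyMeasurable.inner hg'2.1).const_mul 2)
      (Eventually.of_forall fun t => (Real.norm_eq_abs _).trans_le (hbound t))
  have htendsto : Tendsto (‖g ·‖ ^ 2) atTop (nhds 0) :=
    tendsto_zero_of_hasDerivAt_of_integrableOn_Ioi (a := x) (fun t _ => hderiv t)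
      hint.integrableOn hsq.integrableOn
  have hftc := integral_Ioi_of_hasDerivAt_of_tendsto' (a := x) (fun t _ => hderiv t)
    hint.integrableOn htendsto
  calc ‖g x‖ ^ 2 = -∫ t in Ioi x, 2 * inner ℝ (g t) (deriv g t) := by rw [hftc]; ring
    _ ≤ ∫ t in Ioi x, |2 * inner ℝ (g t) (deriv g t)| :=
      (neg_le_abs _).trans abs_integral_le_integral_abs
    _ ≤ ∫ t in Ioi x, (‖g t‖ ^ 2 + ‖deriv g t‖ ^ 2) :=
      integral_mono_of_nonneg (Eventually.of_forall fun t => abs_nonneg _)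
        hsum.integrableOn (Eventually.of_forall hbound)
    _ ≤ ∫ t, (‖g t‖ ^ 2 + ‖deriv g t‖ ^ 2) :=
      setIntegral_le_integral hsum (Eventually.of_forall fun t => by positivity)
    _ = (∫ t, ‖g t‖ ^ 2) + ∫ t, ‖deriv g t‖ ^ 2 := integral_add hsq hsq'

end SupBound

theorem rpow_mul_sq_le_of_le {a b M q : ℝ} (ha : 0 ≤ a) (hb : 0 ≤ b) (hbM : b ≤ M) (hq0 : 0 ≤ q)
    (hq2 : q ≤ 2) : a ^ q * b ^ 2 ≤ M ^ q * ((a ^ 2) ^ (q / 2) * (b ^ 2) ^ (1 - q / 2)) := by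
  rw [Real.rpow_div_two_eq_sqrt q (sq_nonneg a), Real.sqrt_sq ha,
    show 1 - q / 2 = (2 - q) / 2 by ring, Real.rpow_div_two_eq_sqrt _ (sq_nonneg b), Real.sqrt_sq hb]
  have hsplit : b ^ 2 = b ^ q * b ^ (2 - q) := by
    rw [← Real.rpow_add_of_nonneg hb hq0 (sub_nonneg.2 hq2), add_sub_cancel, Real.rpow_two]
  calc a ^ q * b ^ 2 = b ^ q * (a ^ q * b ^ (2 - q)) := by rw [hsplit]; ring
    _ ≤ M ^ q * (a ^ q * b ^ (2 - q)) :=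
      mul_le_mul_of_nonneg_right (Real.rpow_le_rpow hb hbM hq0)
        (mul_nonneg (Real.rpow_nonneg ha q) (Real.rpow_nonneg hb _))

theorem norm_le_H1norm_s9 {g : ℝ → ℂ} (hg : Differentiable ℝ g) (hg2 : MemLp g 2 volume)
    (hg'2 : MemLp (deriv g) 2 volume) (x : ℝ) : ‖g x‖ ≤ H1norm g :=
  Real.le_sqrt_of_sq_le (norm_sq_le_integral_norm_sq_add_integral_norm_deriv_sq_s9 hg hg2 hg'2 x)

theorem L2norm_rpow (f : ℝ → ℂ) (p : ℝ) : L2norm f ^ p = (∫ x, ‖f x‖ ^ 2) ^ (p / 2) :=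
  (Real.rpow_div_two_eq_sqrt p (integral_nonneg fun _ => sq_nonneg _)).symm

/-- For every `q ∈ (0,2)` there is `C_q > 0` such that for every
square-integrable `f : ℝ → ℂ` and every `C¹` function `g : ℝ → ℂ` with `g, g'`
square-integrable, `∫ |f|^q |g|² ≤ C_q ‖f‖^q ‖g‖_{H¹}^q ‖g‖^{2−q}`. -/
theorem weighted_L1_estimate (q : ℝ) (hq0 : 0 < q) (hq2 : q < 2) :
    ∃ C > (0 : ℝ), ∀ f g : ℝ → ℂ,
      MemLp f 2 volume →
      ContDiff ℝ 1 g → MemLp g 2 volume → MemLp (deriv g) 2 volume →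
      (∫ x, ‖f x‖ ^ q * ‖g x‖ ^ 2) ≤
        C * L2norm f ^ q * H1norm g ^ q * L2norm g ^ (2 - q) := by
  refine ⟨1, one_pos, fun f g hf hg hg2 hg'2 => ?_⟩
  have hθ0 : 0 ≤ q / 2 := by linarith
  have hθ1 : q / 2 ≤ 1 := by linarith
  have hf2 := (memLp_two_iff_integrable_sq_norm hf.1).1 hf
  have hg2' := (memLp_two_iff_integrable_sq_norm hg2.1).1 hg2
  have hnonneg : ∀ u : ℝ → ℂ, 0 ≤ᵐ[volume] fun x => ‖u x‖ ^ 2 :=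
    fun u => Eventually.of_forall fun _ => sq_nonneg _
  calc (∫ x, ‖f x‖ ^ q * ‖g x‖ ^ 2)
      ≤ ∫ x, H1norm g ^ q * ((‖f x‖ ^ 2) ^ (q / 2) * (‖g x‖ ^ 2) ^ (1 - q / 2)) :=
        integral_mono_of_nonneg (Eventually.of_forall fun x => by positivity)
          ((integrable_rpow_mul_rpow (hnonneg f) (hnonneg g) hf2 hg2' hθ0 hθ1).const_mul _)
          (Eventually.of_forall fun x => rpow_mul_sq_le_of_le (norm_nonneg _) (norm_nonneg _)
            (norm_le_H1norm_s9 (hg.differentiable one_ne_zero) hg2 hg'2 x) hq0.le hq2.le)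
    _ = H1norm g ^ q * ∫ x, (‖f x‖ ^ 2) ^ (q / 2) * (‖g x‖ ^ 2) ^ (1 - q / 2) :=
        integral_const_mul _ _
    _ ≤ H1norm g ^ q * ((∫ x, ‖f x‖ ^ 2) ^ (q / 2) * (∫ x, ‖g x‖ ^ 2) ^ (1 - q / 2)) :=
        mul_le_mul_of_nonneg_left
          (integral_rpow_mul_rpow_le (hnonneg f) (hnonneg g) hf2 hg2' hθ0 hθ1)
          (Real.rpow_nonneg (Real.sqrt_nonneg _) q)
    _ = 1 * L2norm f ^ q * H1norm g ^ q * L2norm g ^ (2 - q) := by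
        rw [L2norm_rpow, L2norm_rpow, show (2 - q) / 2 = 1 - q / 2 by ring]
        ring
end

section
/- Let T > 0, K ≥ 0, R ≥ 0, and let g : [0,T] → [0,∞) be differentiable with g(0) ≤ R² and g'(t) ≤ K (g(t)+1)² for all t ∈ [0,T]. If K T (1+R²) ≤ 1/2, then g(t) ≤ 2(1+R²) for every t ∈ [0,T]. -/
/-!
Along a positive solution of `u' ≤ K u²` the quantity `K t + 1 / u t` is nondecreasing, since
its derivative is `K - u' / u²`. Integrating this from `a` gives the comparison with the Riccati
solution, `u t ≤ u a / (1 - K (t - a) u a)`, as long as the denominator stays positive. For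
`u = g + 1` the smallness condition `K T (1 + R²) ≤ 1/2` keeps the denominator above `1/2`.
-/

open Set

section RiccatiComparison

variable {K : ℝ} {u u' : ℝ → ℝ}

theorem monotoneOn_mul_add_inv_of_deriv_le_mul_sq {D : Set ℝ} (hD : Convex ℝ D)
    (hu0 : ∀ t ∈ D, u t ≠ 0) (hu : ∀ t ∈ D, HasDerivWithinAt u (u' t) D t)
    (hu' : ∀ t ∈ D, u' t ≤ K * u t ^ 2) :
    MonotoneOn (fun t => K * t + (u t)⁻¹) D := by
  have hderiv : ∀ t ∈ D,
      HasDerivWithinAt (fun t => K * t + (u t)⁻¹) (K - u' t / u t ^ 2) D t := fun t ht =>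
    (((hasDerivWithinAt_id t D).const_mul K).add ((hu t ht).inv (hu0 t ht))).congr_deriv (by ring)
  refine monotoneOn_of_hasDerivWithinAt_nonneg hD
    (fun t ht => (hderiv t ht).continuousWithinAt)
    (fun t ht => (hderiv t (interior_subset ht)).mono interior_subset) fun t ht => ?_
  have ht := interior_subset ht
  rw [sub_nonneg, div_le_iff₀ (sq_pos_of_ne_zero (hu0 t ht))]
  exact hu' t ht

theorem le_div_one_sub_of_deriv_le_mul_sq {a b t : ℝ} (hpos : ∀ s ∈ Icc a b, 0 < u s)
    (hu : ∀ s ∈ Icc a b, HasDerivWithinAt u (u' s) (Icc a b) s)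
    (hu' : ∀ s ∈ Icc a b, u' s ≤ K * u s ^ 2) (ht : t ∈ Icc a b)
    (hblow : K * (t - a) * u a < 1) :
    u t ≤ u a / (1 - K * (t - a) * u a) := by
  have ha : a ∈ Icc a b := ⟨le_rfl, ht.1.trans ht.2⟩
  have hua := hpos a ha
  have hut := hpos t ht
  have hmono : K * a + (u a)⁻¹ ≤ K * t + (u t)⁻¹ :=
    monotoneOn_mul_add_inv_of_deriv_le_mul_sq (convex_Icc a b) (fun s hs => (hpos s hs).ne') hu
      hu' ha ht ht.1
  rw [le_div_iff₀ (sub_pos.2 hblow)]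
  calc u t * (1 - K * (t - a) * u a) = u a * u t * ((u a)⁻¹ - K * (t - a)) := by
        field_simp
    _ ≤ u a * u t * (u t)⁻¹ := by gcongr; linarith
    _ = u a := by field_simp

end RiccatiComparison

theorem nonlinear_gronwall_general
    (T K R : ℝ) (hK : 0 ≤ K)
    (g g' : ℝ → ℝ)
    (hg_nonneg : ∀ t ∈ Set.Icc (0 : ℝ) T, 0 ≤ g t)
    (hg_deriv : ∀ t ∈ Set.Icc (0 : ℝ) T, HasDerivWithinAt g (g' t) (Set.Icc (0 : ℝ) T) t)
    (hg0 : g 0 ≤ R ^ 2)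
    (hg' : ∀ t ∈ Set.Icc (0 : ℝ) T, g' t ≤ K * (g t + 1) ^ 2)
    (hsmall : K * T * (1 + R ^ 2) ≤ 1 / 2) :
    ∀ t ∈ Set.Icc (0 : ℝ) T, g t ≤ 2 * (1 + R ^ 2) := by
  intro t ht
  have hg0_pos : 0 < g 0 + 1 := by linarith [hg_nonneg 0 ⟨le_rfl, ht.1.trans ht.2⟩]
  have hsmall_t : K * (t - 0) * (g 0 + 1) ≤ 1 / 2 := calc
    K * (t - 0) * (g 0 + 1) ≤ K * T * (1 + R ^ 2) := by
      rw [sub_zero]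
      exact mul_le_mul (mul_le_mul_of_nonneg_left ht.2 hK) (by linarith) hg0_pos.le
        (mul_nonneg hK (ht.1.trans ht.2))
    _ ≤ 1 / 2 := hsmall
  have hcmp := le_div_one_sub_of_deriv_le_mul_sq (u := fun s => g s + 1)
    (fun s hs => by linarith [hg_nonneg s hs]) (fun s hs => (hg_deriv s hs).add_const 1) hg' ht
    (by linarith)
  have hhalf : (g 0 + 1) / (1 - K * (t - 0) * (g 0 + 1)) ≤ 2 * (g 0 + 1) := by
    rw [div_le_iff₀ (by linarith)]
    nlinarith
  linarith

/-- nonlinear Gronwall comparison.  Let `T > 0`, `K ≥ 0`, `R ≥ 0`, and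
let `g : [0,T] → [0,∞)` be differentiable with `g(0) ≤ R²` and `g'(t) ≤ K (g(t)+1)²` on
`[0,T]`.  If `K T (1+R²) ≤ 1/2`, then `g(t) ≤ 2(1+R²)` for every `t ∈ [0,T]`. -/
theorem nonlinear_gronwall
    (T K R : ℝ) (hT : 0 < T) (hK : 0 ≤ K) (hR : 0 ≤ R)
    (g g' : ℝ → ℝ)
    (hg_nonneg : ∀ t ∈ Set.Icc (0 : ℝ) T, 0 ≤ g t)
    (hg_deriv : ∀ t ∈ Set.Icc (0 : ℝ) T, HasDerivWithinAt g (g' t) (Set.Icc (0 : ℝ) T) t)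
    (hg0 : g 0 ≤ R ^ 2)
    (hg' : ∀ t ∈ Set.Icc (0 : ℝ) T, g' t ≤ K * (g t + 1) ^ 2)
    (hsmall : K * T * (1 + R ^ 2) ≤ 1 / 2) :
    ∀ t ∈ Set.Icc (0 : ℝ) T, g t ≤ 2 * (1 + R ^ 2) :=
  nonlinear_gronwall_general T K R hK g g' hg_nonneg hg_deriv hg0 hg' hsmall
end
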